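/- For any graph G and integer k ≥ 2, γ_{rk}(G) ≤ γ_{krt}(G) ≤ 2 · γ_{rk}(G). -/

import Mathlib

open SimpleGraph Finset

/-- `f` is a `k`-rainbow dominating function of `G`: every vertex with empty label
sees all colors of `Fin k` among its neighbors' labels. -/
def IsKRDF {V : Type*} (G : SimpleGraph V) (k : ℕ) (f : V → Finset (Fin k)) : Prop :=
  ∀ v, f v = ∅ → ∀ i : Fin k, ∃ u, G.Adj v u ∧ i ∈ f u

/-- `f` is a `k`-rainbow total dominating function of `G`: a `k`RDF such that every
vertex labeled by a singleton `{i}` has a neighbor whose label contains `i`. -/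
def IsKRTDF {V : Type*} (G : SimpleGraph V) (k : ℕ) (f : V → Finset (Fin k)) : Prop :=
  IsKRDF G k f ∧ ∀ v (i : Fin k), f v = {i} → ∃ u, G.Adj v u ∧ i ∈ f u

/-- The `k`-rainbow domination number of `G`. -/
noncomputable def rdnum {V : Type*} [Fintype V] (G : SimpleGraph V) (k : ℕ) : ℕ :=
  sInf {n | ∃ f : V → Finset (Fin k), IsKRDF G k f ∧ ∑ v, (f v).card = n}

/-- The `k`-rainbow total domination number of `G`. -/
noncomputable def rtdnum {V : Type*} [Fintype V] (G : SimpleGraph V) (k : ℕ) : ℕ :=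
  sInf {n | ∃ f : V → Finset (Fin k), IsKRTDF G k f ∧ ∑ v, (f v).card = n}

/-- The domination number of `G`. -/
noncomputable def domnum {V : Type*} [Fintype V] (G : SimpleGraph V) : ℕ :=
  sInf {n | ∃ D : Finset V, (∀ v ∉ D, ∃ u ∈ D, G.Adj u v) ∧ D.card = n}

/-- The total domination number of `G`. -/
noncomputable def totdomnum {V : Type*} [Fintype V] (G : SimpleGraph V) : ℕ :=
  sInf {n | ∃ D : Finset V, (∀ v, ∃ u ∈ D, G.Adj u v) ∧ D.card = n}

/-!
Every kRTDF is a kRDF, and the constant labelling by all colours is a kRTDF, so both minima exist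
and the first inequality is immediate. For the second, fix a fixed-point-free map `σ` on the
colours (a rotation of `Fin k`, which needs `k ≥ 2`) and add `σ '' f v` to every label of a
minimum kRDF `f`: labels at most double, empty labels stay empty, and no label is a singleton, so
the result is a kRTDF.
-/

theorem card_union_image_le {α : Type*} [DecidableEq α] (s : Finset α) (σ : α → α) :
    #(s ∪ s.image σ) ≤ 2 * #s :=
  calc #(s ∪ s.image σ) ≤ #s + #(s.image σ) := card_union_le _ _
    _ ≤ #s + #s := Nat.add_le_add_left card_image_le _
    _ = 2 * #s := (two_mul _).symm

section Rainbow

variable {V : Type*} {G : SimpleGraph V} {k : ℕ}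

theorem IsKRDF.mono {f g : V → Finset (Fin k)} (hf : IsKRDF G k f) (hfg : ∀ v, f v ⊆ g v) :
    IsKRDF G k g := fun v hv i => by
  obtain ⟨u, huv, hi⟩ := hf v (subset_empty.1 (hv ▸ hfg v)) i
  exact ⟨u, huv, hfg u hi⟩

theorem IsKRDF.isKRTDF_of_ne_singleton {f : V → Finset (Fin k)} (hf : IsKRDF G k f)
    (hsingle : ∀ v i, f v ≠ {i}) : IsKRTDF G k f :=
  ⟨hf, fun v i hv => absurd hv (hsingle v i)⟩

theorem isKRTDF_const_univ (hk : k ≠ 1) : IsKRTDF G k fun _ => univ := by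
  refine IsKRDF.isKRTDF_of_ne_singleton (fun v hv i => absurd (hv ▸ mem_univ i) (notMem_empty i))
    fun v i hv => hk ?_
  simpa using congrArg card hv

theorem IsKRDF.isKRTDF_union_image {f : V → Finset (Fin k)} (hf : IsKRDF G k f)
    {σ : Fin k → Fin k} (hσ : ∀ i, σ i ≠ i) : IsKRTDF G k fun v => f v ∪ (f v).image σ := by
  refine (hf.mono fun v => subset_union_left).isKRTDF_of_ne_singleton fun v i hv => ?_
  obtain ⟨j, hj⟩ : (f v).Nonempty := by
    by_contra hempty
    simp [not_nonempty_iff_eq_empty.1 hempty] at hv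
  have hj_eq : j = i := mem_singleton.1 (hv ▸ mem_union_left _ hj)
  have hσj_eq : σ j = i := mem_singleton.1 (hv ▸ mem_union_right _ (mem_image_of_mem σ hj))
  exact hσ j (hσj_eq.trans hj_eq.symm)

variable [Fintype V]

theorem rdnum_le_of_isKRDF {f : V → Finset (Fin k)} (hf : IsKRDF G k f) :
    rdnum G k ≤ ∑ v, #(f v) :=
  Nat.sInf_le ⟨f, hf, rfl⟩

theorem rtdnum_le_of_isKRTDF {f : V → Finset (Fin k)} (hf : IsKRTDF G k f) :
    rtdnum G k ≤ ∑ v, #(f v) :=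
  Nat.sInf_le ⟨f, hf, rfl⟩

theorem exists_isKRDF_sum_card_eq_rdnum (hk : k ≠ 1) :
    ∃ f : V → Finset (Fin k), IsKRDF G k f ∧ ∑ v, #(f v) = rdnum G k := by
  have hne : {n | ∃ f : V → Finset (Fin k), IsKRDF G k f ∧ ∑ v, #(f v) = n}.Nonempty :=
    ⟨_, _, (isKRTDF_const_univ hk).1, rfl⟩
  exact Nat.sInf_mem hne

theorem exists_isKRTDF_sum_card_eq_rtdnum (hk : k ≠ 1) :
    ∃ f : V → Finset (Fin k), IsKRTDF G k f ∧ ∑ v, #(f v) = rtdnum G k := by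
  have hne : {n | ∃ f : V → Finset (Fin k), IsKRTDF G k f ∧ ∑ v, #(f v) = n}.Nonempty :=
    ⟨_, _, isKRTDF_const_univ hk, rfl⟩
  exact Nat.sInf_mem hne

theorem rdnum_le_rtdnum (hk : k ≠ 1) : rdnum G k ≤ rtdnum G k := by
  obtain ⟨f, hf, hsum⟩ := exists_isKRTDF_sum_card_eq_rtdnum (G := G) hk
  exact hsum ▸ rdnum_le_of_isKRDF hf.1

theorem rtdnum_le_two_mul_rdnum (hk : 2 ≤ k) : rtdnum G k ≤ 2 * rdnum G k := by
  obtain ⟨f, hf, hsum⟩ := exists_isKRDF_sum_card_eq_rdnum (G := G) (k := k) (by omega)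
  have hrot (i : Fin k) : finRotate k i ≠ i :=
    Equiv.Perm.mem_support.1 (support_finRotate_of_le hk ▸ mem_univ i)
  calc rtdnum G k ≤ ∑ v, #(f v ∪ (f v).image (finRotate k)) :=
        rtdnum_le_of_isKRTDF (hf.isKRTDF_union_image hrot)
    _ ≤ ∑ v, 2 * #(f v) := sum_le_sum fun v _ => card_union_image_le _ _
    _ = 2 * rdnum G k := by rw [← mul_sum, hsum]

end Rainbow

theorem rdnum_le_rtdnum_le {V : Type*} [Fintype V] (G : SimpleGraph V) (k : ℕ) (hk : 2 ≤ k) :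
    rdnum G k ≤ rtdnum G k ∧ rtdnum G k ≤ 2 * rdnum G k :=
  ⟨rdnum_le_rtdnum (by omega), rtdnum_le_two_mul_rdnum hk⟩
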